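/- For y ∈ [-1/2,1/2], y ≠ 0, let w = e^{2πiy} ≠ 1, and with κ, γ ≥ 0 small define Θ(k,ℓ) = iΩ(k,ℓ)/((1+κγ)Λ(k,ℓ) - iΩ(k,ℓ)), where Λ(k,ℓ) = 4[sin²(πk)+sin²(πℓ)] and Ω(k,ℓ) = 2[sin(2πk)+sin(2πℓ)]. Then the integral I(y) = ∫_{-1/2}^{1/2} Θ(y-x, x) dx equals ((1-w)/(w·a(w)))·[1 - 2(1+κγ)/√(δ(w))], where a(w) = 2 + κγ(1+w̄) and δ(w) = 4(1+κγ)(1-w) + (κγ)²(2-w-w̄), and √ is the principal square root. -/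

import Mathlib

open Real MeasureTheory

noncomputable def Lam (k l : ℝ) : ℝ := 4 * (Real.sin (π * k) ^ 2 + Real.sin (π * l) ^ 2)

noncomputable def Om (k l : ℝ) : ℝ := 2 * (Real.sin (2 * π * k) + Real.sin (2 * π * l))

/-- `Θ(k,ℓ) = iΩ(k,ℓ)/((1+a)Λ(k,ℓ) - iΩ(k,ℓ))` where `a = κγ`. -/
noncomputable def Theta (a : ℝ) (k l : ℝ) : ℂ :=
  (Complex.I * ((Om k l : ℝ) : ℂ)) /
    (((1 + a : ℝ) : ℂ) * ((Lam k l : ℝ) : ℂ) - Complex.I * ((Om k l : ℝ) : ℂ))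

noncomputable def aFn (a : ℝ) (w : ℂ) : ℂ := 2 + (a : ℂ) * (1 + (starRingEnd ℂ) w)

noncomputable def deltaFn (a : ℝ) (w : ℂ) : ℂ :=
  4 * (1 + (a : ℂ)) * (1 - w) + ((a : ℂ)) ^ 2 * (2 - w - (starRingEnd ℂ) w)

/-! With `z = e^{2πix}`, `w = e^{2πiy}` and `z± = (2(1+κγ) ± √δ(w))/a(w)`, one has `z₊z₋ = w`,
`a(w)(z₊ + z₋) = 4(1+κγ)` and `(1+κγ)Λ(y-x,x) - iΩ(y-x,x) = -(a(w)/z)(z - z₊)(z - z₋)`, so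
`Θ(y-x,x) = K (1 + (z₊ + z₋) z/((z - z₊)(z - z₋)))` with `K = (1-w)/(w a(w))`.
Since `|z₊z₋| = 1` and `|a(w)| < |2(1+κγ) + √δ(w)|`, the root `z₋` lies inside the unit circle
and `z₊` outside; Cauchy's formula then gives `∫ z/((z - z₊)(z - z₋)) dx = 1/(z₋ - z₊)`, and
`(z₊ + z₋)/(z₊ - z₋) = 2(1+κγ)/√δ(w)`. -/

open Complex

theorem norm_exp_two_pi_I_mul (x : ℝ) : ‖cexp (2 * π * I * x)‖ = 1 := by
  rw [show 2 * π * I * x = ((2 * π * x : ℝ) : ℂ) * I by push_cast; ring, norm_exp_ofReal_mul_I]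

theorem exp_two_pi_I_mul_ne_of_norm_ne_one {p : ℂ} (hp : ‖p‖ ≠ 1) (x : ℝ) :
    cexp (2 * π * I * x) ≠ p := fun h => hp (h ▸ norm_exp_two_pi_I_mul x)

theorem re_exp_two_pi_I_mul_lt_one {y : ℝ} (hy : y ∈ Set.Icc (-(1:ℝ)/2) (1/2)) (hy0 : y ≠ 0) :
    (cexp (2 * π * I * y)).re < 1 := by
  rw [show 2 * π * I * y = ((2 * π * y : ℝ) : ℂ) * I by push_cast; ring, exp_ofReal_mul_I_re]
  refine (Real.cos_le_one _).lt_of_ne fun h => hy0 ?_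
  have := pi_pos
  rw [Real.cos_eq_one_iff_of_lt_of_lt (by nlinarith [hy.1]) (by nlinarith [hy.2])] at h
  simpa [pi_ne_zero] using h

theorem circleIntegral_zero_one_eq_intervalIntegral (f : ℂ → ℂ) :
    (∮ z in C(0, 1), f z) =
      2 * π * I * ∫ x in (-1/2 : ℝ)..1/2, cexp (2 * π * I * x) * f (cexp (2 * π * I * x)) := by
  set g : ℝ → ℂ := fun θ => cexp (θ * I) * f (cexp (θ * I))
  have hg : Function.Periodic (fun x : ℝ => g (2 * π * x)) 1 := fun x => by
    simp only [g, mul_add, mul_one, ofReal_add, add_mul, Complex.exp_add, ofReal_mul,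
      ofReal_ofNat, exp_two_pi_mul_I]
  have hshift := hg.intervalIntegral_add_eq 0 (-1/2)
  rw [zero_add, show (-1/2 : ℝ) + 1 = 1/2 by norm_num,
    intervalIntegral.integral_comp_mul_left g (mul_ne_zero two_ne_zero pi_ne_zero),
    mul_zero, mul_one] at hshift
  have hcircle : (∮ z in C(0, 1), f z) = I * ∫ θ in (0 : ℝ)..2 * π, g θ := by
    rw [circleIntegral, ← intervalIntegral.integral_const_mul]
    congr 1 with θ
    simp only [deriv_circleMap, circleMap_zero, ofReal_one, one_mul, smul_eq_mul, g]
    ring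
  have hsub : (∫ x in (-1/2 : ℝ)..1/2, cexp (2 * π * I * x) * f (cexp (2 * π * I * x))) =
      ∫ x in (-1/2 : ℝ)..1/2, g (2 * π * x) := by
    simp only [g, ofReal_mul, ofReal_ofNat, mul_right_comm _ I]
  rw [hcircle, hsub, ← hshift, real_smul, ofReal_inv, ofReal_mul, ofReal_ofNat]
  have : (π : ℂ) ≠ 0 := ofReal_ne_zero.mpr pi_ne_zero
  field_simp

theorem continuous_exp_mul_inv_sub_mul_inv_sub {p q : ℂ} (hq : ‖q‖ ≠ 1) (hp : ‖p‖ ≠ 1) :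
    Continuous fun x : ℝ =>
      cexp (2 * π * I * x) * ((cexp (2 * π * I * x) - q)⁻¹ * (cexp (2 * π * I * x) - p)⁻¹) := by
  have he : Continuous fun x : ℝ => cexp (2 * π * I * x) := by fun_prop
  have hinv {c : ℂ} (hc : ‖c‖ ≠ 1) : Continuous fun x : ℝ => (cexp (2 * π * I * x) - c)⁻¹ :=
    (he.sub continuous_const).inv₀ fun x =>
      sub_ne_zero.mpr (exp_two_pi_I_mul_ne_of_norm_ne_one hc x)
  exact he.mul ((hinv hq).mul (hinv hp))

theorem integral_exp_mul_inv_sub_mul_inv_sub {p q : ℂ} (hq : ‖q‖ < 1) (hp : 1 < ‖p‖) :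
    ∫ x in (-1/2 : ℝ)..1/2,
      cexp (2 * π * I * x) * ((cexp (2 * π * I * x) - q)⁻¹ * (cexp (2 * π * I * x) - p)⁻¹)
      = (q - p)⁻¹ := by
  have hd : DifferentiableOn ℂ (fun z => (z - p)⁻¹) (Metric.closedBall 0 1) :=
    (differentiableOn_id.sub_const p).inv fun z hz h => by
      rw [sub_eq_zero, id] at h
      rw [mem_closedBall_zero_iff, h] at hz
      exact hz.not_gt hp
  have hcauchy := hd.circleIntegral_sub_inv_smul (mem_ball_zero_iff.mpr hq)
  simp only [smul_eq_mul, circleIntegral_zero_one_eq_intervalIntegral] at hcauchy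
  have : (2 * π * I : ℂ) ≠ 0 := by simp [pi_ne_zero]
  exact mul_left_cancel₀ this hcauchy

theorem two_mul_ofReal_cos_two_pi_mul (t : ℝ) :
    2 * (Real.cos (2 * π * t) : ℂ) = cexp (2 * π * I * t) + (cexp (2 * π * I * t))⁻¹ := by
  rw [ofReal_cos, two_cos, ← Complex.exp_neg]
  push_cast
  ring_nf

theorem two_mul_I_mul_ofReal_sin_two_pi_mul (t : ℝ) :
    2 * I * (Real.sin (2 * π * t) : ℂ) = cexp (2 * π * I * t) - (cexp (2 * π * I * t))⁻¹ := by
  rw [mul_right_comm, ofReal_sin, two_sin, ← Complex.exp_neg]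
  push_cast
  ring_nf
  rw [I_sq]
  ring

theorem ofReal_Lam (k l : ℝ) :
    (Lam k l : ℂ) = 4 - (cexp (2 * π * I * k) + (cexp (2 * π * I * k))⁻¹)
      - (cexp (2 * π * I * l) + (cexp (2 * π * I * l))⁻¹) := by
  rw [← two_mul_ofReal_cos_two_pi_mul, ← two_mul_ofReal_cos_two_pi_mul, Lam,
    Real.sin_sq_eq_half_sub, Real.sin_sq_eq_half_sub]
  push_cast
  ring_nf

theorem I_mul_ofReal_Om (k l : ℝ) :
    I * (Om k l : ℂ) = (cexp (2 * π * I * k) - (cexp (2 * π * I * k))⁻¹)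
      + (cexp (2 * π * I * l) - (cexp (2 * π * I * l))⁻¹) := by
  rw [← two_mul_I_mul_ofReal_sin_two_pi_mul, ← two_mul_I_mul_ofReal_sin_two_pi_mul, Om]
  push_cast
  ring

theorem quotient_eq_of_roots {a : ℂ} {w z zp zm : ℂ} (hw : w ≠ 0) (hz : z ≠ 0) (hzp : z ≠ zp)
    (hzm : z ≠ zm) (hprod : zp * zm = w)
    (hsum : (2 + a * (1 + w⁻¹)) * (zp + zm) = 4 * (1 + a)) :
    ((w / z - (w / z)⁻¹) + (z - z⁻¹)) /
        ((1 + a) * (4 - (w / z + (w / z)⁻¹) - (z + z⁻¹)) - ((w / z - (w / z)⁻¹) + (z - z⁻¹)))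
      = (1 - w) / (w * (2 + a * (1 + w⁻¹)))
          * (1 + (zp + zm) * (z * ((z - zm)⁻¹ * (z - zp)⁻¹))) := by
  have hP_expand : (z - zp) * (z - zm) = z ^ 2 - (zp + zm) * z + w := by
    rw [← hprod]; ring
  have hden : (1 + a) * (4 - (w / z + (w / z)⁻¹) - (z + z⁻¹)) - ((w / z - (w / z)⁻¹) + (z - z⁻¹))
      = -((2 + a * (1 + w⁻¹)) / z) * ((z - zp) * (z - zm)) := by
    rw [hP_expand]
    field_simp
    linear_combination (-z * w) * hsum + a * z * (zp + zm) * mul_inv_cancel₀ hw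
  have hnum : (w / z - (w / z)⁻¹) + (z - z⁻¹)
      = (w - 1) / (w * z) * ((z - zp) * (z - zm) + (zp + zm) * z) := by
    rw [hP_expand]
    field_simp
    ring
  rw [hden, hnum]
  field_simp
  ring

theorem re_cpow_one_half_nonneg (z : ℂ) : 0 ≤ (z ^ (1 / 2 : ℂ)).re := by
  rw [one_div, cpow_inv_two_re]
  exact Real.sqrt_nonneg _

theorem cpow_one_half_sq (z : ℂ) : (z ^ (1 / 2 : ℂ)) ^ 2 = z := by
  rw [one_div, cpow_ofNat_inv_pow]

section Roots

variable {a : ℝ} {w : ℂ}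

theorem aFn_eq_of_norm_eq_one (hw : ‖w‖ = 1) : aFn a w = 2 + a * (1 + w⁻¹) := by
  rw [aFn, inv_eq_conj hw]

theorem re_deltaFn : (deltaFn a w).re = (1 - w.re) * (4 * (1 + a) + 2 * a ^ 2) := by
  simp only [deltaFn, ← ofReal_pow, add_re, mul_re, re_ofNat, one_re, ofReal_re, im_ofNat, add_im,
    one_im, ofReal_im, add_zero, mul_zero, sub_zero, sub_re, mul_im, zero_mul, sub_im, zero_sub,
    mul_neg, neg_zero, conj_re, conj_im, sub_self]
  ring

theorem re_aFn_pos (ha : 0 ≤ a) (hw : ‖w‖ = 1) : 0 < (aFn a w).re := by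
  have hre : -1 ≤ w.re := (abs_le.mp ((abs_re_le_norm w).trans_eq hw)).1
  have : (aFn a w).re = 2 + a * (1 + w.re) := by simp [aFn]
  rw [this]
  nlinarith

theorem aFn_ne_zero (ha : 0 ≤ a) (hw : ‖w‖ = 1) : aFn a w ≠ 0 :=
  fun h => (re_aFn_pos ha hw).ne' (by rw [h, zero_re])

theorem sq_sub_deltaFn (hw : ‖w‖ = 1) : (2 * (1 + a)) ^ 2 - deltaFn a w = w * aFn a w ^ 2 := by
  have hw0 : w ≠ 0 := by rintro rfl; simp at hw
  rw [aFn_eq_of_norm_eq_one hw, deltaFn, ← inv_eq_conj hw]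
  field_simp
  ring

theorem norm_aFn_lt (ha : 0 ≤ a) (hw : ‖w‖ = 1) (hre : w.re < 1) :
    ‖aFn a w‖ < ‖2 * (1 + a) + deltaFn a w ^ (1 / 2 : ℂ)‖ := by
  have hr_re := re_cpow_one_half_nonneg (deltaFn a w)
  have hr_sq : ‖deltaFn a w ^ (1 / 2 : ℂ)‖ ^ 2 = ‖deltaFn a w‖ := by
    rw [← norm_pow, cpow_one_half_sq]
  set r := deltaFn a w ^ (1 / 2 : ℂ)
  have hw_sq : w.re ^ 2 + w.im ^ 2 = 1 := by
    rw [← sq_norm_sub_sq_re w, hw]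
    ring
  have hA : ‖aFn a w‖ ^ 2 = (2 + a * (1 + w.re)) ^ 2 + (a * w.im) ^ 2 := by
    rw [Complex.sq_norm, normSq_apply]
    simp only [aFn, add_re, re_ofNat, mul_re, ofReal_re, one_re, conj_re, ofReal_im, add_im, one_im,
      conj_im, zero_add, mul_neg, zero_mul, neg_zero, sub_zero, im_ofNat, mul_im, add_zero, neg_mul,
      neg_neg]
    ring
  have hB : ‖2 * (1 + a) + r‖ ^ 2 = 4 * (1 + a) ^ 2 + 4 * (1 + a) * r.re + ‖r‖ ^ 2 := by
    rw [Complex.sq_norm, Complex.sq_norm, normSq_apply, normSq_apply]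
    simp only [add_re, mul_re, re_ofNat, one_re, ofReal_re, im_ofNat, add_im, one_im, ofReal_im,
      add_zero, mul_zero, sub_zero, mul_im, zero_mul, zero_add]
    ring
  -- `Re r ≥ 0` and `‖r‖² = ‖δ‖ ≥ Re δ` bound the right side below by `4(1+a)² + Re δ`, which
  -- exceeds `‖a(w)‖²` by `4(1 - Re w)(1+a)²`.
  rw [← sq_lt_sq₀ (norm_nonneg _) (norm_nonneg _), hA, hB, hr_sq]
  nlinarith [re_deltaFn (a := a) (w := w), re_le_norm (deltaFn a w)]

noncomputable def rootPlus (a : ℝ) (w : ℂ) : ℂ :=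
  (2 * (1 + a) + deltaFn a w ^ (1 / 2 : ℂ)) / aFn a w

noncomputable def rootMinus (a : ℝ) (w : ℂ) : ℂ :=
  (2 * (1 + a) - deltaFn a w ^ (1 / 2 : ℂ)) / aFn a w

theorem rootPlus_mul_rootMinus (ha : 0 ≤ a) (hw : ‖w‖ = 1) : rootPlus a w * rootMinus a w = w := by
  have hA := aFn_ne_zero ha hw
  rw [rootPlus, rootMinus, div_mul_div_comm, ← sq_sub_sq, cpow_one_half_sq,
    sq_sub_deltaFn hw, ← sq, mul_div_cancel_right₀ _ (pow_ne_zero 2 hA)]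

theorem aFn_mul_rootPlus_add_rootMinus (ha : 0 ≤ a) (hw : ‖w‖ = 1) :
    aFn a w * (rootPlus a w + rootMinus a w) = 4 * (1 + a) := by
  have hA := aFn_ne_zero ha hw
  rw [rootPlus, rootMinus, ← add_div, mul_div_cancel₀ _ hA]
  ring

theorem rootPlus_add_rootMinus_div_sub (ha : 0 ≤ a) (hw : ‖w‖ = 1) :
    (rootPlus a w + rootMinus a w) / (rootPlus a w - rootMinus a w)
      = 2 * (1 + a) / deltaFn a w ^ (1 / 2 : ℂ) := by
  have hA := aFn_ne_zero ha hw
  rw [rootPlus, rootMinus, ← add_div, ← sub_div, div_div_div_cancel_right₀ hA,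
    ← mul_div_mul_left (2 * (1 + (a : ℂ))) _ (two_ne_zero' ℂ)]
  ring_nf

theorem one_lt_norm_rootPlus (ha : 0 ≤ a) (hw : ‖w‖ = 1) (hre : w.re < 1) :
    1 < ‖rootPlus a w‖ := by
  have hA : 0 < ‖aFn a w‖ := norm_pos_iff.mpr (aFn_ne_zero ha hw)
  rw [rootPlus, norm_div, one_lt_div hA]
  exact norm_aFn_lt ha hw hre

theorem norm_rootMinus_lt_one (ha : 0 ≤ a) (hw : ‖w‖ = 1) (hre : w.re < 1) :
    ‖rootMinus a w‖ < 1 := by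
  have hprod : ‖rootPlus a w‖ * ‖rootMinus a w‖ = 1 := by
    rw [← norm_mul, rootPlus_mul_rootMinus ha hw, hw]
  have := one_lt_norm_rootPlus ha hw hre
  nlinarith [norm_nonneg (rootMinus a w)]

end Roots

theorem Theta_eq {a : ℝ} {w : ℂ} {y : ℝ} (ha : 0 ≤ a) (hwy : w = cexp (2 * π * I * y))
    (hre : w.re < 1) (x : ℝ) :
    Theta a (y - x) x = (1 - w) / (w * aFn a w) * (1 + (rootPlus a w + rootMinus a w) *
      (cexp (2 * π * I * x) * ((cexp (2 * π * I * x) - rootMinus a w)⁻¹ *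
        (cexp (2 * π * I * x) - rootPlus a w)⁻¹))) := by
  have hw : ‖w‖ = 1 := hwy ▸ norm_exp_two_pi_I_mul y
  have hexp : cexp (2 * π * I * (y - x : ℝ)) = w / cexp (2 * π * I * x) := by
    rw [hwy, ← Complex.exp_sub]
    push_cast
    ring_nf
  have hsum := aFn_mul_rootPlus_add_rootMinus ha hw
  rw [aFn_eq_of_norm_eq_one hw] at hsum ⊢
  rw [Theta, ofReal_add, ofReal_one, ofReal_Lam, I_mul_ofReal_Om, hexp]
  exact quotient_eq_of_roots (by rintro rfl; simp at hw) (exp_ne_zero _)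
    (exp_two_pi_I_mul_ne_of_norm_ne_one (one_lt_norm_rootPlus ha hw hre).ne' x)
    (exp_two_pi_I_mul_ne_of_norm_ne_one (norm_rootMinus_lt_one ha hw hre).ne x)
    (rootPlus_mul_rootMinus ha hw) hsum

theorem stmt_11_general (κ γ : ℝ) (hκ : 0 ≤ κ) (hγ : 0 ≤ γ) (y : ℝ)
    (hy : y ∈ Set.Icc (-(1:ℝ)/2) (1/2)) (hy0 : y ≠ 0)
    (w : ℂ) (hw : w = Complex.exp (2 * (π : ℂ) * Complex.I * (y : ℂ))) :
    (∫ x in (-(1:ℝ)/2)..(1/2), Theta (κ * γ) (y - x) x)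
      = ((1 - w) / (w * aFn (κ * γ) w))
          * (1 - 2 * (1 + (κ * γ : ℝ)) / (deltaFn (κ * γ) w) ^ ((1 : ℂ)/2)) := by
  set a := κ * γ
  have ha : 0 ≤ a := mul_nonneg hκ hγ
  have hw_norm : ‖w‖ = 1 := hw ▸ norm_exp_two_pi_I_mul y
  have hre : w.re < 1 := hw ▸ re_exp_two_pi_I_mul_lt_one hy hy0
  have hzp := one_lt_norm_rootPlus ha hw_norm hre
  have hzm := norm_rootMinus_lt_one ha hw_norm hre
  have hg := (continuous_exp_mul_inv_sub_mul_inv_sub hzm.ne hzp.ne').intervalIntegrable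
    (μ := volume) (-(1:ℝ)/2) (1/2)
  rw [intervalIntegral.integral_congr fun x _ => Theta_eq ha hw hre x,
    intervalIntegral.integral_const_mul,
    intervalIntegral.integral_add intervalIntegrable_const (hg.const_mul _),
    intervalIntegral.integral_const_mul, integral_exp_mul_inv_sub_mul_inv_sub hzm hzp,
    intervalIntegral.integral_const, ← rootPlus_add_rootMinus_div_sub ha hw_norm,
    ← neg_sub (rootPlus a w), inv_neg, mul_neg, ← div_eq_mul_inv]
  congr 1
  norm_num [sub_eq_add_neg]

/-- Residue-theorem evaluation of `I(y) = ∫ Θ(y-x,x) dx`. -/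
theorem stmt_11 (κ γ : ℝ) (hκ : 0 ≤ κ) (hγ : 0 ≤ γ) (y : ℝ)
    (hy : y ∈ Set.Icc (-(1:ℝ)/2) (1/2)) (hy0 : y ≠ 0)
    (hden : ∀ x : ℝ,
      ((1 + κ * γ : ℝ) : ℂ) * ((Lam (y - x) x : ℝ) : ℂ)
        - Complex.I * ((Om (y - x) x : ℝ) : ℂ) ≠ 0)
    (w : ℂ) (hw : w = Complex.exp (2 * (π : ℂ) * Complex.I * (y : ℂ))) :
    (∫ x in (-(1:ℝ)/2)..(1/2), Theta (κ * γ) (y - x) x)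
      = ((1 - w) / (w * aFn (κ * γ) w))
          * (1 - 2 * (1 + (κ * γ : ℝ)) / (deltaFn (κ * γ) w) ^ ((1 : ℂ)/2)) :=
  stmt_11_general κ γ hκ hγ y hy hy0 w hw
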